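/- arXiv:2505.02098 — 4 statements merged into one kernel-verified Lean document; each statement's English description precedes it below -/
import Mathlib

section
/- ζ(3)² < (8/9) · ζ(2) · ζ(4), where ζ is the Riemann zeta function. Equivalently, ζ(3)²/(ζ(2)ζ(4)) < 8/9. -/
open Complex ComplexOrder Filter

lemma telescope_hasSum :
    HasSum (fun n : ℕ => 1 / ((n + 1) * (n + 2) : ℝ) - 1 / ((n + 2) * (n + 3))) (1 / 2) := by
  have h : ∀ n : ℕ, (0:ℝ) ≤ 1 / ((n + 1) * (n + 2) : ℝ) - 1 / ((n + 2) * (n + 3)) := by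
    intro n
    rw [sub_nonneg]
    apply one_div_le_one_div_of_le
    · positivity
    · have : (0:ℝ) ≤ (n:ℝ) := Nat.cast_nonneg n
      nlinarith
  rw [hasSum_iff_tendsto_nat_of_nonneg h]
  have key : ∀ N : ℕ, ∑ n ∈ Finset.range N,
      (1 / ((n + 1) * (n + 2) : ℝ) - 1 / ((n + 2) * (n + 3)))
      = 1 / 2 - 1 / ((N + 1) * (N + 2) : ℝ) := by
    intro N
    have h2 := Finset.sum_range_sub' (fun n : ℕ => 1 / ((n + 1) * (n + 2) : ℝ)) N
    rw [show (1:ℝ) / 2 - 1 / ((N + 1) * (N + 2) : ℝ)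
        = 1 / (((0:ℕ) + 1) * ((0:ℕ) + 2) : ℝ) - 1 / ((N + 1) * (N + 2)) by norm_num, ← h2]
    apply Finset.sum_congr rfl
    intro n _
    push_cast
    ring_nf
  simp only [key]
  have hz : Tendsto (fun N : ℕ => 1 / ((N + 1) * (N + 2) : ℝ)) atTop (nhds 0) := by
    apply squeeze_zero (fun n => by positivity) (g := fun n : ℕ => 1 / (n + 1 : ℝ))
    · intro n
      apply one_div_le_one_div_of_le
      · positivity
      · have : (0:ℝ) ≤ (n:ℝ) := Nat.cast_nonneg n
        nlinarith
    · exact tendsto_one_div_add_atTop_nhds_zero_nat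
  simpa using (tendsto_const_nhds (x := (1/2 : ℝ)) (f := atTop)).sub hz

lemma hsum3 : Summable (fun n : ℕ => 1 / (n : ℝ) ^ 3) :=
  Real.summable_one_div_nat_pow.mpr (by norm_num)

lemma real_zeta3_le : (∑' n : ℕ, 1 / (n : ℝ) ^ 3) ≤ 5 / 4 := by
  have step1 : (∑' n : ℕ, 1 / (n : ℝ) ^ 3)
      = 1 + ∑' n : ℕ, 1 / ((n : ℝ) + 2) ^ 3 := by
    rw [Summable.tsum_eq_zero_add hsum3, Summable.tsum_eq_zero_add ((summable_nat_add_iff 1).mpr hsum3)]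
    norm_num
    apply tsum_congr
    intro n
    ring_nf
  have htail : (∑' n : ℕ, 1 / ((n : ℝ) + 2) ^ 3) ≤ 1 / 4 := by
    have h2 : (∑' n : ℕ, (1 / ((n + 1) * (n + 2) : ℝ) - 1 / ((n + 2) * (n + 3)))) = 1 / 2 :=
      telescope_hasSum.tsum_eq
    have hle : (∑' n : ℕ, 1 / ((n : ℝ) + 2) ^ 3)
        ≤ ∑' n : ℕ, (1/2) * (1 / ((n + 1) * (n + 2) : ℝ) - 1 / ((n + 2) * (n + 3))) := by
      apply Summable.tsum_le_tsum
      · intro n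
        have hn : (0:ℝ) ≤ (n:ℝ) := Nat.cast_nonneg n
        have heq : (1:ℝ)/2 * (1 / (((n:ℝ) + 1) * ((n:ℝ) + 2)) - 1 / (((n:ℝ) + 2) * ((n:ℝ) + 3)))
            = 1 / (((n:ℝ) + 1) * ((n:ℝ) + 2) * ((n:ℝ) + 3)) := by
          have h1 : ((n:ℝ) + 1) ≠ 0 := by positivity
          have h2 : ((n:ℝ) + 2) ≠ 0 := by positivity
          have h3 : ((n:ℝ) + 3) ≠ 0 := by positivity
          field_simp
          ring
        rw [heq]
        apply one_div_le_one_div_of_le (by positivity)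
        nlinarith
      · exact ((summable_nat_add_iff 2).mpr hsum3).congr (by intro n; push_cast; ring_nf)
      · exact telescope_hasSum.summable.mul_left _
    rw [tsum_mul_left, h2] at hle
    linarith
  linarith [step1, htail]

lemma real_zeta3_nonneg : (0:ℝ) ≤ ∑' n : ℕ, 1 / (n : ℝ) ^ 3 :=
  tsum_nonneg (fun n => by positivity)

theorem zeta_three_sq_lt : riemannZeta 3 ^ 2 < (8 / 9) * riemannZeta 2 * riemannZeta 4 := by
  have h3 : riemannZeta 3 = ((∑' n : ℕ, 1 / (n : ℝ) ^ 3 : ℝ) : ℂ) := by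
    have h := zeta_nat_eq_tsum_of_gt_one (k := 3) (by norm_num)
    rw [show ((3:ℕ):ℂ) = 3 by norm_num] at h
    rw [h, Complex.ofReal_tsum]
    apply tsum_congr
    intro n
    push_cast
    rfl
  rw [h3, riemannZeta_two, riemannZeta_four]
  set S : ℝ := ∑' n : ℕ, 1 / (n : ℝ) ^ 3
  have key : (S:ℝ) ^ 2 < 8 / 9 * (Real.pi ^ 2 / 6) * (Real.pi ^ 4 / 90) := by
    have h1 := real_zeta3_le
    have h2 := real_zeta3_nonneg
    have hpi := Real.pi_gt_d6
    nlinarith [sq_nonneg (Real.pi - 3.141592), sq_nonneg Real.pi,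
      sq_nonneg (Real.pi^2 - 9), sq_nonneg (Real.pi^3 - 31)]
  calc ((S:ℂ)) ^ 2 = ((S ^ 2 : ℝ) : ℂ) := by push_cast; ring
    _ < ((8 / 9 * (Real.pi ^ 2 / 6) * (Real.pi ^ 4 / 90) : ℝ) : ℂ) := by
        exact_mod_cast key
    _ = 8 / 9 * ((Real.pi:ℂ) ^ 2 / 6) * ((Real.pi:ℂ) ^ 4 / 90) := by push_cast; ring
end

section
/- The 2×2 real matrix with entries [[1/2, 1/7], [1/7, 1/24]] is positive semi-definite, but the 2×2 matrix [[ζ(2), ζ(7)], [ζ(7), ζ(12)/2]] is not positive semi-definite. -/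
/-!
The first matrix has positive diagonal and determinant `1/48 - 1/49 > 0`. If the second were
positive semidefinite, its determinant would give `ζ(2) ζ(12) ≥ 2 ζ(7)² ≥ 2`. But `ζ(2) = π²/6 < 5/3`,
and comparing the terms `n ≥ 2` of the two series gives `ζ(12) - 1 ≤ (ζ(2) - 1) / 2¹⁰`, so
`ζ(12) < 6/5`.
-/

open Complex ComplexOrder

theorem Matrix.posSemidef_fin_two_of_sq_le {a b d : ℝ} (ha : 0 ≤ a) (hd : 0 ≤ d)
    (hb : b ^ 2 ≤ a * d) : (!![a, b; b, d]).PosSemidef := by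
  refine Matrix.posSemidef_iff_dotProduct_mulVec.mpr ⟨?_, fun x ↦ ?_⟩
  · ext i j
    fin_cases i <;> fin_cases j <;> rfl
  · simp only [Matrix.mulVec, dotProduct, Fin.sum_univ_two, star_trivial, Matrix.of_apply,
      Matrix.cons_val', Matrix.cons_val_zero, Matrix.cons_val_one, Matrix.empty_val',
      Matrix.cons_val_fin_one]
    rcases ha.eq_or_lt with rfl | ha
    · obtain rfl : b = 0 := by nlinarith
      nlinarith [sq_nonneg (x 1)]
    · -- `a` times the form is `(a x₀ + b x₁)² + (a d - b²) x₁²`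
      nlinarith [sq_nonneg (a * x 0 + b * x 1), mul_nonneg (sub_nonneg.mpr hb) (sq_nonneg (x 1))]

section ZetaValues

variable {k : ℕ}

theorem riemannZeta_natCast_eq_ofReal_tsum (hk : 1 < k) :
    riemannZeta k = ((∑' n : ℕ, 1 / (n : ℝ) ^ k : ℝ) : ℂ) := by
  rw [zeta_nat_eq_tsum_of_gt_one hk, Complex.ofReal_tsum]
  push_cast
  rfl

theorem one_le_tsum_one_div_nat_pow (hk : 1 < k) : 1 ≤ ∑' n : ℕ, 1 / (n : ℝ) ^ k := by
  simpa using (Real.summable_one_div_nat_pow.mpr hk).le_tsum 1 fun _ _ ↦ by positivity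

theorem tsum_one_div_nat_pow_eq_one_add (hk : 1 < k) :
    ∑' n : ℕ, 1 / (n : ℝ) ^ k = 1 + ∑' n : ℕ, 1 / ((n : ℝ) + 2) ^ k := by
  have hk0 : k ≠ 0 := by omega
  rw [← (Real.summable_one_div_nat_pow.mpr hk).sum_add_tsum_nat_add 2]
  simp [Finset.sum_range_succ, hk0]

theorem tsum_one_div_nat_pow_add_sub_one_le (hk : 1 < k) (m : ℕ) :
    ∑' n : ℕ, 1 / (n : ℝ) ^ (k + m) - 1 ≤ (∑' n : ℕ, 1 / (n : ℝ) ^ k - 1) / 2 ^ m := by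
  have hsum {j : ℕ} (hj : 1 < j) : Summable fun n : ℕ ↦ 1 / ((n : ℝ) + 2) ^ j := by
    exact_mod_cast (summable_nat_add_iff 2).mpr (Real.summable_one_div_nat_pow.mpr hj)
  rw [tsum_one_div_nat_pow_eq_one_add hk, tsum_one_div_nat_pow_eq_one_add (by omega),
    add_sub_cancel_left, add_sub_cancel_left, div_eq_mul_one_div, mul_comm, ← tsum_mul_left]
  refine (hsum (by omega)).tsum_le_tsum (fun n ↦ ?_) ((hsum hk).mul_left _)
  have h2 : (2 : ℝ) ≤ n + 2 := by linarith [n.cast_nonneg (α := ℝ)]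
  calc 1 / ((n : ℝ) + 2) ^ (k + m) = 1 / ((n + 2) ^ m * (n + 2) ^ k) := by ring
    _ ≤ 1 / (2 ^ m * (n + 2) ^ k) := by gcongr
    _ = 1 / 2 ^ m * (1 / ((n : ℝ) + 2) ^ k) := by rw [one_div_mul_one_div]

end ZetaValues

theorem pick_matrix_psd_but_zeta_matrix_not :
    Matrix.PosSemidef (!![(1 : ℝ) / 2, 1 / 7; 1 / 7, 1 / 24]) ∧
    ¬ Matrix.PosSemidef (!![riemannZeta 2, riemannZeta 7;
                            riemannZeta 7, riemannZeta 12 / 2]) := by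
  refine ⟨Matrix.posSemidef_fin_two_of_sq_le (by norm_num) (by norm_num) (by norm_num), fun hζ ↦ ?_⟩
  set Z : ℕ → ℝ := fun k ↦ ∑' n : ℕ, 1 / (n : ℝ) ^ k
  have hζZ (k : ℕ) (hk : 1 < k) : riemannZeta k = Z k := riemannZeta_natCast_eq_ofReal_tsum hk
  have hdet : 0 ≤ Z 2 * (Z 12 / 2) - Z 7 * Z 7 := by
    have h2 : riemannZeta 2 = Z 2 := by exact_mod_cast hζZ 2 (by norm_num)
    have h7 : riemannZeta 7 = Z 7 := by exact_mod_cast hζZ 7 (by norm_num)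
    have h12 : riemannZeta 12 = Z 12 := by exact_mod_cast hζZ 12 (by norm_num)
    have := hζ.det_nonneg
    rw [Matrix.det_fin_two_of, h2, h7, h12] at this
    exact_mod_cast this
  have hZ2 : Z 2 < 5 / 3 := by
    rw [show Z 2 = Real.pi ^ 2 / 6 from hasSum_zeta_two.tsum_eq]
    nlinarith [Real.pi_lt_d2, Real.pi_pos]
  have hZ12 : Z 12 < 6 / 5 := by
    linarith [tsum_one_div_nat_pow_add_sub_one_le (k := 2) (by norm_num) 10]
  have hZ7 : 1 ≤ Z 7 := one_le_tsum_one_div_nat_pow (by norm_num)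
  have hZ12_pos : 0 < Z 12 := by linarith [one_le_tsum_one_div_nat_pow (k := 12) (by norm_num)]
  nlinarith
end

section
/- Schur product theorem: if A and B are n×n positive semi-definite complex matrices, then their entrywise (Schur) product A ∘ B, given by (A∘B)_{ij} = A_{ij} B_{ij}, is positive semi-definite. -/
open ComplexOrder
theorem schur_product_theorem
    (n : ℕ) (A B : Matrix (Fin n) (Fin n) ℂ)
    (hA : A.PosSemidef) (hB : B.PosSemidef) :
    (Matrix.hadamard A B).PosSemidef :=
  hA.hadamard hB
end

section
/- Lurking isometry: Let X be a set, H₁, H₂ Hilbert spaces, and f : X → H₁, g : X → H₂ functions such that ⟨f(s), f(u)⟩ = ⟨g(s), g(u)⟩ for all s, u ∈ X. Then there exists a linear isometry V from the closed linear span of {f(s) : s ∈ X} in H₁ to H₂ such that V(f(s)) = g(s) for all s ∈ X. -/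
/-!
Send a formal combination `∑ cₛ • s` to `∑ cₛ • f s` and to `∑ cₛ • g s`. Since `f` and `g` have
the same Gram matrix, the two images have the same norm, so the second map factors through the
first as a linear isometry on `span (range f)`; as `H₂` is complete, it extends by continuity to
the closure of that span.
-/

open Finsupp Submodule

theorem LinearMap.denseRange_codRestrict_topologicalClosure {R M E : Type*} [Semiring R]
    [AddCommMonoid M] [Module R M] [AddCommMonoid E] [Module R E] [TopologicalSpace E]
    [ContinuousAdd E] [ContinuousConstSMul R E] {p : Submodule R E} (φ : M →ₗ[R] E)
    (hφ : LinearMap.range φ = p) :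
    DenseRange (φ.codRestrict p.topologicalClosure
      fun x => p.le_topologicalClosure (hφ ▸ LinearMap.mem_range_self φ x)) := by
  rw [DenseRange, Subtype.dense_iff, ← Set.range_comp]
  change _ ⊆ closure (Set.range φ)
  rw [← LinearMap.coe_range, hφ, topologicalClosure_coe]

theorem LinearMap.exists_linearIsometry_comp_eq_of_norm_eq {𝕜 M E F : Type*} [NormedField 𝕜]
    [AddCommGroup M] [Module 𝕜 M] [SeminormedAddCommGroup E] [NormedSpace 𝕜 E]
    [NormedAddCommGroup F] [NormedSpace 𝕜 F] [CompleteSpace F]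
    {e : M →ₗ[𝕜] E} {φ : M →ₗ[𝕜] F} (he : DenseRange e) (hφ : ∀ x, ‖φ x‖ = ‖e x‖) :
    ∃ V : E →ₗᵢ[𝕜] F, ∀ x, V (e x) = φ x := by
  have hW : ∀ x, φ.extendOfNorm e (e x) = φ x :=
    extendOfNorm_eq he ⟨1, fun x => by rw [hφ, one_mul]⟩
  refine ⟨⟨φ.extendOfNorm e, fun y => he.induction_on y ?_ fun x => ?_⟩, hW⟩
  · exact isClosed_eq (by fun_prop) continuous_norm
  · simp [hW, hφ]

section InnerProductSpace

variable {𝕜 X E F : Type*} [RCLike 𝕜]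
  [NormedAddCommGroup E] [InnerProductSpace 𝕜 E] [NormedAddCommGroup F] [InnerProductSpace 𝕜 F]
  {f : X → E} {g : X → F}

theorem inner_linearCombination_eq_of_inner_eq
    (h : ∀ s u, inner 𝕜 (f s) (f u) = inner 𝕜 (g s) (g u)) (c d : X →₀ 𝕜) :
    inner 𝕜 (linearCombination 𝕜 f c) (linearCombination 𝕜 f d) =
      inner 𝕜 (linearCombination 𝕜 g c) (linearCombination 𝕜 g d) := by
  simp [linearCombination_apply, Finsupp.inner_sum, Finsupp.sum_inner, inner_smul_left,
    inner_smul_right, h]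

theorem norm_linearCombination_eq_of_inner_eq
    (h : ∀ s u, inner 𝕜 (f s) (f u) = inner 𝕜 (g s) (g u)) (c : X →₀ 𝕜) :
    ‖linearCombination 𝕜 f c‖ = ‖linearCombination 𝕜 g c‖ := by
  rw [norm_eq_sqrt_re_inner (𝕜 := 𝕜), norm_eq_sqrt_re_inner (𝕜 := 𝕜),
    inner_linearCombination_eq_of_inner_eq h]

end InnerProductSpace

theorem lurking_isometry_general
    {X : Type*} {H₁ H₂ : Type*}
    [NormedAddCommGroup H₁] [InnerProductSpace ℂ H₁]
    [NormedAddCommGroup H₂] [InnerProductSpace ℂ H₂] [CompleteSpace H₂]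
    (f : X → H₁) (g : X → H₂)
    (h : ∀ s u : X, (inner ℂ (f s) (f u) : ℂ) = inner ℂ (g s) (g u)) :
    ∃ V : ((Submodule.span ℂ (Set.range f)).topologicalClosure : Submodule ℂ H₁) →ₗᵢ[ℂ] H₂,
      ∀ (s : X) (hs : f s ∈ (Submodule.span ℂ (Set.range f)).topologicalClosure),
        V ⟨f s, hs⟩ = g s := by
  set e := (linearCombination ℂ f).codRestrict (span ℂ (Set.range f)).topologicalClosure
    fun c => le_topologicalClosure _
      (range_linearCombination (v := f) ℂ ▸ LinearMap.mem_range_self _ c)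
  have he : DenseRange e :=
    (linearCombination ℂ f).denseRange_codRestrict_topologicalClosure (range_linearCombination ℂ)
  obtain ⟨V, hV⟩ := LinearMap.exists_linearIsometry_comp_eq_of_norm_eq he
    fun c => (norm_linearCombination_eq_of_inner_eq h c).symm
  refine ⟨V, fun s hs => ?_⟩
  have hes : e (single s 1) = ⟨f s, hs⟩ := Subtype.ext (by simp [e])
  simpa [hes] using hV (single s 1)

theorem lurking_isometry
    {X : Type*} {H₁ H₂ : Type*}
    [NormedAddCommGroup H₁] [InnerProductSpace ℂ H₁] [CompleteSpace H₁]
    [NormedAddCommGroup H₂] [InnerProductSpace ℂ H₂] [CompleteSpace H₂]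
    (f : X → H₁) (g : X → H₂)
    (h : ∀ s u : X, (inner ℂ (f s) (f u) : ℂ) = inner ℂ (g s) (g u)) :
    ∃ V : ((Submodule.span ℂ (Set.range f)).topologicalClosure : Submodule ℂ H₁) →ₗᵢ[ℂ] H₂,
      ∀ (s : X) (hs : f s ∈ (Submodule.span ℂ (Set.range f)).topologicalClosure),
        V ⟨f s, hs⟩ = g s :=
  lurking_isometry_general f g h
end
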